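/- Let sn, cs, A, a be the space form functions for curvature κ ∈ {-1, 0, 1}, with a(r) := k·(A(r)/A'(r))·(cs(r)/sn(r)). Then (sn(r)^k·(1 - a(r)))' = κ·k·sn(r)·A(r) for all r in (0, diam/2). In particular, sign(1 - a(r)) = κ. -/

import Mathlib

/-!
Clearing the denominators of `a`, the function `G := sn^k - k·A·cs` equals `sn^k·(1 - a)` wherever
`sn ≠ 0`. Since `sn' = cs`, `cs' = -κ·sn` and `A' = sn^(k-1)`, the terms `k·sn^(k-1)·cs` cancel in
`G'`, leaving `G' = κ·k·sn·A`. As `G(0) = 0`, integrating gives `G(r) = κ·k·∫₀^r sn·A`, and the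
integral is positive because `sn` and `A` are positive on `(0, r)`; dividing by `sn(r)^k > 0`
yields the sign of `1 - a(r)`.
-/

open Real

/-- The warping function of the space form of curvature `κ ∈ {-1, 0, 1}`. -/
noncomputable def sn (κ : ℤ) (r : ℝ) : ℝ :=
  if κ = -1 then Real.sinh r else if κ = 0 then r else Real.sin r

/-- `cs = sn'`. -/
noncomputable def cs (κ : ℤ) (r : ℝ) : ℝ :=
  if κ = -1 then Real.cosh r else if κ = 0 then 1 else Real.cos r

/-- `A(r) = ∫₀^r sn(t)^(k-1) dt`. -/
noncomputable def Afun (κ : ℤ) (k : ℕ) (r : ℝ) : ℝ :=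
  ∫ t in (0:ℝ)..r, sn κ t ^ (k - 1)

/-- `a(r) = k·A(r)·cs(r)/(A'(r)·sn(r))`, with `A'(r) = sn(r)^(k-1)`. -/
noncomputable def afun (κ : ℤ) (k : ℕ) (r : ℝ) : ℝ :=
  (k : ℝ) * (Afun κ k r / sn κ r ^ (k - 1)) * (cs κ r / sn κ r)

noncomputable def snPowOneSubAfun (κ : ℤ) (k : ℕ) (s : ℝ) : ℝ :=
  sn κ s ^ k - k * Afun κ k s * cs κ s

section

variable {κ : ℤ} {k : ℕ}

lemma sn_zero : sn κ 0 = 0 := by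
  unfold sn; split_ifs <;> simp

lemma continuous_sn : Continuous (sn κ) := by
  unfold sn; split_ifs <;> fun_prop

lemma hasDerivAt_sn (r : ℝ) : HasDerivAt (sn κ) (cs κ r) r := by
  unfold sn cs
  split_ifs
  · exact hasDerivAt_sinh r
  · exact hasDerivAt_id r
  · exact hasDerivAt_sin r

lemma hasDerivAt_cs (hκ : κ = -1 ∨ κ = 0 ∨ κ = 1) (r : ℝ) :
    HasDerivAt (cs κ) (-κ * sn κ r) r := by
  rcases hκ with rfl | rfl | rfl <;> unfold cs sn <;> norm_num
  · exact hasDerivAt_cosh r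
  · exact hasDerivAt_const r 1
  · exact hasDerivAt_cos r

lemma sn_pos (hκ : κ = -1 ∨ κ = 0 ∨ κ = 1) {r : ℝ} (hr : 0 < r) (hπ : κ = 1 → r < π) :
    0 < sn κ r := by
  rcases hκ with rfl | rfl | rfl <;> simp only [sn] <;> norm_num
  · exact hr
  · exact hr
  · exact sin_pos_of_pos_of_lt_pi hr (hπ rfl)

lemma hasDerivAt_Afun (r : ℝ) : HasDerivAt (Afun κ k) (sn κ r ^ (k - 1)) r :=
  have hc : Continuous fun t => sn κ t ^ (k - 1) := continuous_sn.pow _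
  intervalIntegral.integral_hasDerivAt_right (hc.intervalIntegrable _ _)
    (hc.stronglyMeasurableAtFilter _ _) hc.continuousAt

lemma continuous_Afun : Continuous (Afun κ k) :=
  continuous_iff_continuousAt.2 fun r => (hasDerivAt_Afun r).continuousAt

lemma Afun_pos (hκ : κ = -1 ∨ κ = 0 ∨ κ = 1) {r : ℝ} (hr : 0 < r) (hπ : κ = 1 → r ≤ π) :
    0 < Afun κ k r :=
  intervalIntegral.intervalIntegral_pos_of_pos_on
    ((continuous_sn.pow _).intervalIntegrable _ _)
    (fun _ hx => pow_pos (sn_pos hκ hx.1 fun h => hx.2.trans_le (hπ h)) _) hr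

lemma snPowOneSubAfun_zero (hk : k ≠ 0) : snPowOneSubAfun κ k 0 = 0 := by
  simp [snPowOneSubAfun, sn_zero, Afun, hk]

lemma hasDerivAt_snPowOneSubAfun (hκ : κ = -1 ∨ κ = 0 ∨ κ = 1) (r : ℝ) :
    HasDerivAt (snPowOneSubAfun κ k) (κ * k * sn κ r * Afun κ k r) r := by
  have hsn := (hasDerivAt_sn (κ := κ) r).pow k
  have hAcs := ((hasDerivAt_Afun (κ := κ) (k := k) r).const_mul (k : ℝ)).mul (hasDerivAt_cs hκ r)
  exact (hsn.sub hAcs).congr_deriv (by ring)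

lemma snPowOneSubAfun_eq_integral (hκ : κ = -1 ∨ κ = 0 ∨ κ = 1) (hk : k ≠ 0) (r : ℝ) :
    snPowOneSubAfun κ k r = κ * (k * ∫ s in (0 : ℝ)..r, sn κ s * Afun κ k s) := by
  have hint : Continuous fun s => κ * k * sn κ s * Afun κ k s := by
    have := continuous_sn (κ := κ); have := continuous_Afun (κ := κ) (k := k); fun_prop
  have hFTC := intervalIntegral.integral_eq_sub_of_hasDerivAt (a := 0) (b := r)
    (fun x _ => hasDerivAt_snPowOneSubAfun hκ x) (hint.intervalIntegrable _ _)
  rw [snPowOneSubAfun_zero hk, sub_zero] at hFTC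
  rw [← hFTC, ← intervalIntegral.integral_const_mul, ← intervalIntegral.integral_const_mul]
  simp only [mul_assoc]

lemma integral_sn_mul_Afun_pos (hκ : κ = -1 ∨ κ = 0 ∨ κ = 1) {r : ℝ} (hr : 0 < r)
    (hπ : κ = 1 → r < π) : 0 < ∫ s in (0 : ℝ)..r, sn κ s * Afun κ k s := by
  refine intervalIntegral.intervalIntegral_pos_of_pos_on
    ((continuous_sn.mul continuous_Afun).intervalIntegrable _ _) (fun x hx => ?_) hr
  have hxπ : κ = 1 → x < π := fun h => hx.2.trans (hπ h)
  exact mul_pos (sn_pos hκ hx.1 hxπ) (Afun_pos hκ hx.1 fun h => (hxπ h).le)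

lemma sn_pow_mul_one_sub_afun (hk : 1 ≤ k) {s : ℝ} (hs : sn κ s ≠ 0) :
    sn κ s ^ k * (1 - afun κ k s) = snPowOneSubAfun κ k s := by
  obtain ⟨j, rfl⟩ := Nat.exists_eq_add_of_le' hk
  simp only [afun, snPowOneSubAfun, Nat.add_sub_cancel, pow_succ]
  field_simp

end

/-- `(sn(r)^k·(1 - a(r)))' = κ·k·sn(r)·A(r)` on `(0, diam/2)`, and in particular
`sign(1 - a(r)) = κ`. -/
theorem stmt4 (k : ℕ) (hk : 1 ≤ k) (κ : ℤ) (hκ : κ = -1 ∨ κ = 0 ∨ κ = 1)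
    (r : ℝ) (hr : 0 < r) (hr' : κ = 1 → r < Real.pi / 2) :
    deriv (fun s => sn κ s ^ k * (1 - afun κ k s)) r = (κ : ℝ) * k * sn κ r * Afun κ k r ∧
    Real.sign (1 - afun κ k r) = (κ : ℝ) := by
  have hπ : κ = 1 → r < π := fun h => (hr' h).trans (by linarith [pi_pos])
  have hsn_ne : ∀ᶠ s in nhds r, sn κ s ≠ 0 :=
    (continuous_sn.continuousAt.eventually_ne (sn_pos hκ hr hπ).ne')
  have heq : (fun s => sn κ s ^ k * (1 - afun κ k s)) =ᶠ[nhds r] snPowOneSubAfun κ k :=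
    hsn_ne.mono fun s hs => sn_pow_mul_one_sub_afun hk hs
  refine ⟨heq.deriv_eq.trans (hasDerivAt_snPowOneSubAfun hκ r).deriv, ?_⟩
  have hc : 0 < k * (∫ s in (0 : ℝ)..r, sn κ s * Afun κ k s) / sn κ r ^ k :=
    div_pos (mul_pos (by exact_mod_cast hk) (integral_sn_mul_Afun_pos hκ hr hπ))
      (pow_pos (sn_pos hκ hr hπ) k)
  have hone_sub_afun :
      1 - afun κ k r = κ * (k * (∫ s in (0 : ℝ)..r, sn κ s * Afun κ k s) / sn κ r ^ k) := by
    rw [mul_div_assoc', ← snPowOneSubAfun_eq_integral hκ (by omega), ← heq.eq_of_nhds,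
      mul_div_cancel_left₀ _ (pow_ne_zero k hsn_ne.self_of_nhds)]
  rcases hκ with rfl | rfl | rfl <;> simp [hone_sub_afun, sign_of_pos hc, sign_of_neg, hc]
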